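/- The n-dimensional Witt polynomials are primitive: in the Hopf algebra R[a_I : I in Z_{\geq 0}^n - {0}] with comultiplication determined by multiplication of products prod_I (1 - a_I t^I), for each nonzero multi-index I the element w_I = sum_{kJ = I} gcd(J) a_J^k satisfies Delta(w_I) = w_I tensor 1 + 1 tensor w_I. -/

import Mathlib

open Finset

/-- The infinite product `∏_{I ≠ 0} (1 - a_I t^I)`, defined coefficientwise via the
finite partial products. -/
noncomputable def wittFactorProd {n : ℕ} {B : Type*} [CommRing B]
    (a : (Fin n →₀ ℕ) → B) : MvPowerSeries (Fin n) B :=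
  fun M => MvPowerSeries.coeff (R := B) M
    (∏ I ∈ (Finset.Iic M).erase 0, (1 - MvPowerSeries.monomial (R := B) I (a I)))

/-- The greatest common divisor of the nonzero entries of a multi-index. -/
def mgcd {n : ℕ} (I : Fin n →₀ ℕ) : ℕ := Finset.univ.gcd fun i => I i

/-- The ghost component `w_I(a) = ∑_{kJ = I, k ≥ 1} gcd(J) a_J^k`. -/
noncomputable def ghostMap {n : ℕ} {B : Type*} [CommRing B]
    (a : (Fin n →₀ ℕ) → B) (I : Fin n →₀ ℕ) : B :=
  ∑ p ∈ ((Finset.Icc 1 (I.sum fun _ m => m)) ×ˢ Finset.Iic I).filter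
      (fun p => p.1 • p.2 = I),
    (mgcd p.2 : B) * a p.2 ^ p.1

/-! For an additive weight `w` on multi-indices, `D : t^M ↦ w(M) t^M` is a derivation of
`B[[t_1, …, t_n]]`. The logarithmic derivative `D f / f` of `f = ∏_J (1 - a_J t^J)` (a unit,
having constant term `1`) is `-∑_J w(J) ∑_{k ≥ 1} a_J^k t^{kJ}`, whose `I`-th coefficient is
`∑_{kJ = I} w(J) a_J^k`; as a logarithmic derivative it is additive in the product. By Bézout
applied to the entries of `I` there is an additive `w` with `w(J) = gcd(J)` whenever `kJ = I`,
and for this weight the `I`-th coefficient is the ghost component `w_I`. -/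

theorem Finsupp.degree_pos_of_ne_zero {σ : Type*} {J : σ →₀ ℕ} (hJ : J ≠ 0) : 0 < J.degree :=
  Nat.pos_of_ne_zero ((degree_eq_zero_iff J).not.mpr hJ)

theorem Finsupp.nsmul_left_injective {σ : Type*} {J : σ →₀ ℕ} (hJ : J ≠ 0) :
    Function.Injective (· • J : ℕ → σ →₀ ℕ) := by
  intro k l h
  have := congrArg (fun M : σ →₀ ℕ => M.degree) h
  rw [map_nsmul, map_nsmul, smul_eq_mul, smul_eq_mul] at this
  exact Nat.eq_of_mul_eq_mul_right (degree_pos_of_ne_zero hJ) this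

theorem Finset.natCast_gcd {ι : Type*} (s : Finset ι) (f : ι → ℕ) :
    ((s.gcd f : ℕ) : ℤ) = s.gcd fun i => (f i : ℤ) := by
  classical
  induction s using Finset.induction_on with
  | empty => simp
  | insert i s hi ih =>
    rw [gcd_insert, gcd_insert, ← ih, ← Int.coe_gcd, Int.gcd_natCast_natCast]
    rfl

theorem Derivation.map_prod_of_forall_eq_mul {R A : Type*} [CommSemiring R] [CommSemiring A]
    [Algebra R A] (D : Derivation R A A) {ι : Type*} (s : Finset ι) (f g : ι → A)
    (hD : ∀ i ∈ s, D (f i) = f i * g i) :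
    D (∏ i ∈ s, f i) = (∏ i ∈ s, f i) * ∑ i ∈ s, g i := by
  classical
  induction s using Finset.induction_on with
  | empty => simp
  | insert j s hj ih =>
    rw [prod_insert hj, sum_insert hj, Derivation.leibniz, smul_eq_mul, smul_eq_mul,
      ih fun i hi => hD i (mem_insert_of_mem hi), hD j (mem_insert_self j s)]
    ring

namespace MvPowerSeries

variable {σ R : Type*}

section CommSemiring

variable [CommSemiring R]

noncomputable def weightDerivation (w : (σ →₀ ℕ) →+ R) :
    Derivation R (MvPowerSeries σ R) (MvPowerSeries σ R) where
  toFun f M := w M * coeff M f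
  map_add' f g := by ext M; exact mul_add ..
  map_smul' r f := by ext M; exact mul_left_comm ..
  map_one_eq_zero' := by
    classical
    ext M
    change w M * coeff M 1 = 0
    rw [coeff_one]
    split_ifs with h <;> simp [h]
  leibniz' f g := by
    classical
    ext M
    change w M * coeff M (f * g) = coeff M (f * _ + g * _)
    rw [mul_comm g, map_add, coeff_mul, coeff_mul, coeff_mul, mul_sum, ← sum_add_distrib]
    refine sum_congr rfl fun p hp => ?_
    change _ = coeff p.1 f * (w p.2 * coeff p.2 g) + w p.1 * coeff p.1 f * coeff p.2 g
    rw [← HasAntidiagonal.mem_antidiagonal.mp hp, map_add]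
    ring

theorem coeff_weightDerivation (w : (σ →₀ ℕ) →+ R) (f : MvPowerSeries σ R) (M : σ →₀ ℕ) :
    coeff M (weightDerivation w f) = w M * coeff M f :=
  rfl

theorem weightDerivation_monomial (w : (σ →₀ ℕ) →+ R) (J : σ →₀ ℕ) (x : R) :
    weightDerivation w (monomial J x) = monomial J (w J * x) := by
  classical
  ext M
  rw [coeff_weightDerivation, coeff_monomial, coeff_monomial]
  split_ifs with h
  · rw [h]
  · exact mul_zero _

-- `∑_{k ≥ 1} (x t^J)^k`; for `J ≠ 0` the bound `k ≤ degree M` loses no terms.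
open Classical in
noncomputable def geomSeries (J : σ →₀ ℕ) (x : R) : MvPowerSeries σ R :=
  fun M : σ →₀ ℕ => ∑ k ∈ Icc 1 M.degree, if k • J = M then x ^ k else 0

open Classical in
theorem coeff_geomSeries (J M : σ →₀ ℕ) (x : R) :
    coeff M (geomSeries J x) = ∑ k ∈ Icc 1 M.degree, if k • J = M then x ^ k else 0 :=
  rfl

theorem coeff_geomSeries_succ_nsmul {J : σ →₀ ℕ} (hJ : J ≠ 0) (x : R) (l : ℕ) :
    coeff ((l + 1) • J) (geomSeries J x) = x ^ (l + 1) := by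
  have hmem : l + 1 ∈ Icc 1 ((l + 1) • J).degree := by
    refine mem_Icc.mpr ⟨by omega, ?_⟩
    rw [map_nsmul, smul_eq_mul]
    exact Nat.le_mul_of_pos_right _ (Finsupp.degree_pos_of_ne_zero hJ)
  rw [coeff_geomSeries, sum_eq_single_of_mem _ hmem, if_pos rfl]
  intro k _ hk
  rw [if_neg fun h => hk (Finsupp.nsmul_left_injective hJ h)]

theorem coeff_geomSeries_eq_zero {J M : σ →₀ ℕ} (x : R) (hM : ∀ l : ℕ, (l + 1) • J ≠ M) :
    coeff M (geomSeries J x) = 0 := by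
  rw [coeff_geomSeries]
  refine sum_eq_zero fun k hk => if_neg ?_
  obtain ⟨l, rfl⟩ := Nat.exists_eq_add_of_le' (mem_Icc.mp hk).1
  exact hM l

end CommSemiring

section CommRing

variable [CommRing R]

theorem one_sub_monomial_mul_geomSeries {J : σ →₀ ℕ} (hJ : J ≠ 0) (x : R) :
    (1 - monomial J x) * geomSeries J x = monomial J x := by
  classical
  ext M
  rw [sub_mul, one_mul, map_sub, coeff_monomial_mul, coeff_monomial]
  by_cases hM : ∃ l : ℕ, (l + 1) • J = M
  · obtain ⟨l, rfl⟩ := hM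
    rw [if_pos (le_self_nsmul zero_le l.succ_ne_zero), succ_nsmul', add_tsub_cancel_left,
      ← succ_nsmul', coeff_geomSeries_succ_nsmul hJ]
    rcases l with _ | l
    · rw [zero_smul, coeff_geomSeries_eq_zero x fun l hl => hJ ((smul_eq_zero.mp hl).resolve_left
        l.succ_ne_zero), zero_add, one_smul, if_pos rfl]
      ring
    · rw [coeff_geomSeries_succ_nsmul hJ, if_neg fun h => ?_]
      · ring
      · have := Finsupp.nsmul_left_injective hJ (h.trans (one_smul ℕ J).symm)
        omega
  · push Not at hM
    have hMJ : M ≠ J := fun h => hM 0 (by rw [zero_add, one_smul, h])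
    rw [coeff_geomSeries_eq_zero x hM, if_neg hMJ]
    split_ifs with hJM
    · rw [coeff_geomSeries_eq_zero x fun l hl => hM (l + 1) ?_, mul_zero, sub_zero]
      rw [succ_nsmul', hl, add_tsub_cancel_of_le hJM]
    · rw [sub_zero]

theorem weightDerivation_one_sub_monomial (w : (σ →₀ ℕ) →+ R) {J : σ →₀ ℕ} (hJ : J ≠ 0)
    (x : R) :
    weightDerivation w (1 - monomial J x) = (1 - monomial J x) * -(C (w J) * geomSeries J x) := by
  rw [map_sub, Derivation.map_one_eq_zero, weightDerivation_monomial, zero_sub, mul_neg,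
    mul_left_comm, one_sub_monomial_mul_geomSeries hJ, ← monomial_zero_eq_C_apply,
    monomial_mul_monomial, zero_add]

theorem coeff_prod_one_sub_monomial_mul_of_not_le (x : (σ →₀ ℕ) → R) {N : σ →₀ ℕ}
    (T : Finset (σ →₀ ℕ)) (hT : ∀ J ∈ T, ¬J ≤ N) (g : MvPowerSeries σ R) :
    coeff N ((∏ J ∈ T, (1 - monomial J (x J))) * g) = coeff N g := by
  classical
  induction T using Finset.induction_on with
  | empty => rw [prod_empty, one_mul]
  | insert J T hJ ih =>
    rw [prod_insert hJ, mul_assoc, sub_mul, one_mul, map_sub, coeff_monomial_mul,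
      if_neg (hT J (mem_insert_self J T)), sub_zero,
      ih fun J' hJ' => hT J' (mem_insert_of_mem hJ')]

theorem coeff_prod_one_sub_monomial (x : (σ →₀ ℕ) → R) (S : Finset (σ →₀ ℕ)) (N : σ →₀ ℕ)
    [DecidablePred (· ≤ N)] :
    coeff N (∏ J ∈ S, (1 - monomial J (x J))) =
      coeff N (∏ J ∈ S with J ≤ N, (1 - monomial J (x J))) := by
  rw [← prod_filter_not_mul_prod_filter S (· ≤ N)]
  exact coeff_prod_one_sub_monomial_mul_of_not_le x _ (fun J hJ => (mem_filter.mp hJ).2) _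

variable [DecidableEq σ]

noncomputable def ghostSeries (w : (σ →₀ ℕ) →+ R) (x : (σ →₀ ℕ) → R) : MvPowerSeries σ R :=
  fun Q : σ →₀ ℕ => ∑ p ∈ (Icc 1 Q.degree ×ˢ Iic Q).filter (fun p => p.1 • p.2 = Q),
    w p.2 * x p.2 ^ p.1

theorem coeff_ghostSeries (w : (σ →₀ ℕ) →+ R) (x : (σ →₀ ℕ) → R) (Q : σ →₀ ℕ) :
    coeff Q (ghostSeries w x) =
      ∑ p ∈ (Icc 1 Q.degree ×ˢ Iic Q).filter (fun p => p.1 • p.2 = Q), w p.2 * x p.2 ^ p.1 :=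
  rfl

theorem coeff_sum_geomSeries (w : (σ →₀ ℕ) →+ R) (x : (σ →₀ ℕ) → R) {Q M : σ →₀ ℕ}
    (hQM : Q ≤ M) :
    coeff Q (∑ J ∈ (Iic M).erase 0, C (w J) * geomSeries J (x J)) =
      coeff Q (ghostSeries w x) := by
  set F : (σ →₀ ℕ) → R := fun J => ∑ k ∈ Icc 1 Q.degree, if k • J = Q then w J * x J ^ k else 0
  have hF : ∀ J ∉ (Iic Q).erase 0, F J = 0 := by
    intro J hJ
    refine sum_eq_zero fun k hk => if_neg ?_
    rintro rfl
    obtain ⟨hk1, hkJ⟩ := mem_Icc.mp hk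
    refine hJ (mem_erase.mpr ⟨fun hJ0 => ?_, mem_Iic.mpr (le_self_nsmul zero_le (by omega))⟩)
    rw [hJ0, smul_zero, map_zero] at hkJ
    omega
  have hL : coeff Q (∑ J ∈ (Iic M).erase 0, C (w J) * geomSeries J (x J)) =
      ∑ J ∈ (Iic M).erase 0, F J := by
    simp only [map_sum, coeff_C_mul, coeff_geomSeries, mul_sum, mul_ite, mul_zero, F]
  have hR : coeff Q (ghostSeries w x) = ∑ J ∈ Iic Q, F J := by
    rw [coeff_ghostSeries, sum_filter, sum_product_right]
  rw [hL, hR, ← sum_subset (erase_subset 0 (Iic Q)) fun J _ hJ => hF J hJ,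
    ← sum_subset (erase_subset_erase 0 (Iic_subset_Iic.mpr hQM)) fun J _ hJ => hF J hJ]

end CommRing

end MvPowerSeries

open MvPowerSeries

section Witt

variable {n : ℕ}

theorem mgcd_nsmul (k : ℕ) (J : Fin n →₀ ℕ) : mgcd (k • J) = k * mgcd J := by
  simp only [mgcd, Finsupp.smul_apply, smul_eq_mul, Finset.gcd_mul_left, normalize_eq]

theorem exists_addMonoidHom_eq_mgcd (I : Fin n →₀ ℕ) :
    ∃ w : (Fin n →₀ ℕ) →+ ℤ, ∀ k J, k ≠ 0 → k • J = I → w J = mgcd J := by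
  obtain ⟨u, hu⟩ := gcd_eq_sum_mul univ fun i => (I i : ℤ)
  refine ⟨Finsupp.weight u, fun k J hk hkJ => ?_⟩
  have hI : Finsupp.weight u I = mgcd I := by
    rw [mgcd, Finset.natCast_gcd, hu, Finsupp.weight_apply, Finsupp.sum_fintype _ _ (by simp)]
    simp only [nsmul_eq_mul, mul_comm]
  rw [← hkJ, map_nsmul, mgcd_nsmul, nsmul_eq_mul, Nat.cast_mul] at hI
  exact mul_left_cancel₀ (Nat.cast_ne_zero.mpr hk) hI

variable {B : Type*} [CommRing B]

theorem coeff_wittFactorProd (x : (Fin n →₀ ℕ) → B) {N M : Fin n →₀ ℕ} (hNM : N ≤ M) :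
    coeff N (wittFactorProd x) = coeff N (∏ J ∈ (Iic M).erase 0, (1 - monomial J (x J))) := by
  change coeff N (∏ J ∈ (Iic N).erase 0, _) = _
  rw [coeff_prod_one_sub_monomial, coeff_prod_one_sub_monomial x ((Iic M).erase 0)]
  congr 2
  ext J
  simp only [mem_filter, mem_erase, mem_Iic]
  exact and_congr_left fun hJ => and_congr_right fun _ => iff_of_true hJ (hJ.trans hNM)

theorem constantCoeff_wittFactorProd (x : (Fin n →₀ ℕ) → B) :
    constantCoeff (wittFactorProd x) = 1 := by
  rw [← coeff_zero_eq_constantCoeff_apply]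
  change coeff 0 (∏ J ∈ (Iic 0).erase 0, (1 - monomial J (x J))) = 1
  rw [show (Iic (0 : Fin n →₀ ℕ)).erase 0 = ∅ by simp [← bot_eq_zero], prod_empty, coeff_zero_one]

theorem weightDerivation_wittFactorProd (w : (Fin n →₀ ℕ) →+ B) (x : (Fin n →₀ ℕ) → B) :
    weightDerivation w (wittFactorProd x) = -(wittFactorProd x * ghostSeries w x) := by
  ext M
  have hprod := (weightDerivation w).map_prod_of_forall_eq_mul ((Iic M).erase 0)
    (fun J => 1 - monomial J (x J)) (fun J => -(C (w J) * geomSeries J (x J)))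
    fun J hJ => weightDerivation_one_sub_monomial w (ne_of_mem_erase hJ) (x J)
  rw [sum_neg_distrib, mul_neg] at hprod
  rw [coeff_weightDerivation, coeff_wittFactorProd x le_rfl, ← coeff_weightDerivation, hprod,
    map_neg, map_neg, coeff_mul, coeff_mul]
  congr 1
  refine sum_congr rfl fun p hp => ?_
  have hp := HasAntidiagonal.mem_antidiagonal.mp hp
  rw [← coeff_wittFactorProd x (hp ▸ le_self_add), coeff_sum_geomSeries w x (hp ▸ le_add_self)]

theorem ghostSeries_add_of_wittFactorProd_eq_mul {a b c : (Fin n →₀ ℕ) → B}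
    (h : wittFactorProd c = wittFactorProd a * wittFactorProd b) (w : (Fin n →₀ ℕ) →+ B) :
    ghostSeries w c = ghostSeries w a + ghostSeries w b := by
  have hunit : IsUnit (wittFactorProd c) := by
    rw [isUnit_iff_constantCoeff, constantCoeff_wittFactorProd]
    exact isUnit_one
  refine hunit.mul_left_cancel (neg_injective ?_)
  rw [← weightDerivation_wittFactorProd, h, Derivation.leibniz, smul_eq_mul, smul_eq_mul,
    weightDerivation_wittFactorProd, weightDerivation_wittFactorProd]
  ring

theorem exists_ghostMap_eq_coeff_ghostSeries (I : Fin n →₀ ℕ) :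
    ∃ w : (Fin n →₀ ℕ) →+ B, ∀ x, ghostMap x I = coeff I (ghostSeries w x) := by
  obtain ⟨w, hw⟩ := exists_addMonoidHom_eq_mgcd I
  refine ⟨(Int.castAddHom B).comp w, fun x => sum_congr rfl fun p hp => ?_⟩
  obtain ⟨hmem, hpI⟩ := mem_filter.mp hp
  have hk : p.1 ≠ 0 := Nat.one_le_iff_ne_zero.mp (mem_Icc.mp (mem_product.mp hmem).1).1
  simp only [AddMonoidHom.comp_apply, hw p.1 p.2 hk hpI, Int.coe_castAddHom, Int.cast_natCast]

end Witt

/-- The `n`-dimensional Witt polynomials `w_I = ∑_{kJ = I} gcd(J) a_J^k` are primitive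
in the Hopf algebra `R[a_I : I ∈ ℤ_{≥0}^n - 0]` with comultiplication determined by
multiplication of the products `∏_I (1 - a_I t^I)`.  Equivalently (the formulation
below), the ghost components are additive: for every commutative ring `B`, if
`∏ (1 - c_I t^I) = ∏ (1 - a_I t^I) · ∏ (1 - b_I t^I)` in `B[[t_1,…,t_n]]` then
`w_I(c) = w_I(a) + w_I(b)` for every nonzero multi-index `I`. -/
theorem witt_polynomials_primitive {n : ℕ} {B : Type*} [CommRing B]
    (a b c : (Fin n →₀ ℕ) → B)
    (h : wittFactorProd c = wittFactorProd a * wittFactorProd b) :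
    ∀ I : Fin n →₀ ℕ, I ≠ 0 → ghostMap c I = ghostMap a I + ghostMap b I := by
  intro I _
  obtain ⟨w, hw⟩ := exists_ghostMap_eq_coeff_ghostSeries (B := B) I
  rw [hw, hw, hw, ghostSeries_add_of_wittFactorProd_eq_mul h, map_add]
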